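/- arXiv:2503.12238 — 3 statements merged into one kernel-verified Lean document; each statement's English description precedes it below -/
import Mathlib

section
/- Let S be a nonempty finite type, let Q, P : Matrix S S ℝ be substochastic with Q ≤ P entrywise, let α be a real number with 0 < α < 1, and let γ : S → ℝ satisfy γ s ≥ 0 for every s. Then for every s', ∑_s γ s * (1 - α • Q)⁻¹ s s' ≤ ∑_s γ s * (1 - α • P)⁻¹ s s'. -/
/-
For `0 ≤ α < 1` and substochastic `M`, the row-sum operator norm of `α • M` is below `1`, so
`(1 - α • M)⁻¹ = ∑ₙ (α • M) ^ n` entrywise. For entrywise nonnegative matrices `A ≤ B` one has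
`A ^ n ≤ B ^ n` entrywise, so the Neumann series of `α • Q` is dominated term by term by that of
`α • P`.
-/

open Matrix BigOperators

/-- A matrix is substochastic if every entry is nonnegative and every row sum is at most 1. -/
def Substochastic {S : Type*} [Fintype S] (P : Matrix S S ℝ) : Prop :=
  (∀ s s', 0 ≤ P s s') ∧ ∀ s, ∑ s', P s s' ≤ 1

namespace Matrix

variable {S : Type*} [Fintype S]

theorem pow_apply_le_pow_apply [DecidableEq S] {R : Type*} [Semiring R] [PartialOrder R]
    [IsOrderedRing R] {A B : Matrix S S R} (hA : ∀ i j, 0 ≤ A i j)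
    (hAB : ∀ i j, A i j ≤ B i j) (n : ℕ) (i j : S) : (A ^ n) i j ≤ (B ^ n) i j := by
  have hB : ∀ i j, 0 ≤ B i j := fun i j => (hA i j).trans (hAB i j)
  induction n generalizing j with
  | zero => rfl
  | succ n ih =>
    rw [pow_succ, pow_succ, mul_apply, mul_apply]
    exact Finset.sum_le_sum fun k _ =>
      mul_le_mul (ih k) (hAB k j) (hA k j) (pow_apply_nonneg hB n i k)

end Matrix

section LinftyOpNorm

attribute [local instance] Matrix.linftyOpNormedAddCommGroup Matrix.linftyOpNormedSpace
  Matrix.linftyOpNormedRing Matrix.linftyOpNormedAlgebra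

variable {S : Type*} [Fintype S]

theorem Matrix.hasSum_pow_apply_inv_one_sub [DecidableEq S] {A : Matrix S S ℝ} (hA : ‖A‖ < 1)
    (i j : S) : HasSum (fun n => (A ^ n) i j) ((1 - A)⁻¹ i j) := by
  have : CompleteSpace (Matrix S S ℝ) := FiniteDimensional.complete ℝ _
  rw [nonsing_inv_eq_ringInverse]
  exact Pi.hasSum.1 (Pi.hasSum.1 (hasSum_geom_series_inverse A hA) i) j

namespace Substochastic

theorem linfty_opNorm_le_one {M : Matrix S S ℝ} (hM : Substochastic M) : ‖M‖ ≤ 1 := by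
  rw [linfty_opNorm_def, NNReal.coe_le_one, Finset.sup_le_iff]
  intro i _
  rw [← NNReal.coe_le_one, NNReal.coe_sum]
  simpa only [coe_nnnorm, Real.norm_of_nonneg (hM.1 i _)] using hM.2 i

theorem linfty_opNorm_smul_lt_one {M : Matrix S S ℝ} (hM : Substochastic M) {α : ℝ}
    (hα0 : 0 ≤ α) (hα1 : α < 1) : ‖α • M‖ < 1 :=
  calc ‖α • M‖ ≤ ‖α‖ * ‖M‖ := norm_smul_le α M
    _ ≤ α * 1 := by
      rw [Real.norm_of_nonneg hα0]
      exact mul_le_mul_of_nonneg_left hM.linfty_opNorm_le_one hα0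
    _ < 1 := by linarith

theorem inv_one_sub_smul_apply_le [DecidableEq S] {Q P : Matrix S S ℝ} (hQ : Substochastic Q)
    (hP : Substochastic P) (hQP : ∀ i j, Q i j ≤ P i j) {α : ℝ} (hα0 : 0 ≤ α) (hα1 : α < 1)
    (i j : S) : (1 - α • Q)⁻¹ i j ≤ (1 - α • P)⁻¹ i j :=
  hasSum_le
    (pow_apply_le_pow_apply (fun k l => mul_nonneg hα0 (hQ.1 k l))
      (fun k l => mul_le_mul_of_nonneg_left (hQP k l) hα0) · i j)
    (hasSum_pow_apply_inv_one_sub (hQ.linfty_opNorm_smul_lt_one hα0 hα1) i j)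
    (hasSum_pow_apply_inv_one_sub (hP.linfty_opNorm_smul_lt_one hα0 hα1) i j)

end Substochastic

end LinftyOpNorm

theorem stmt_5_general {S : Type*} [Fintype S] [DecidableEq S]
    (Q P : Matrix S S ℝ) (hQ : Substochastic Q) (hP : Substochastic P)
    (hQP : ∀ s s', Q s s' ≤ P s s')
    (α : ℝ) (hα0 : 0 < α) (hα1 : α < 1)
    (γ : S → ℝ) (hγ : ∀ s, 0 ≤ γ s) :
    ∀ s', ∑ s, γ s * (1 - α • Q)⁻¹ s s' ≤ ∑ s, γ s * (1 - α • P)⁻¹ s s' := fun s' =>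
  Finset.sum_le_sum fun s _ => mul_le_mul_of_nonneg_left
    (hQ.inv_one_sub_smul_apply_le hP hQP hα0.le hα1 s s') (hγ s)

theorem stmt_5 {S : Type*} [Fintype S] [Nonempty S] [DecidableEq S]
    (Q P : Matrix S S ℝ) (hQ : Substochastic Q) (hP : Substochastic P)
    (hQP : ∀ s s', Q s s' ≤ P s s')
    (α : ℝ) (hα0 : 0 < α) (hα1 : α < 1)
    (γ : S → ℝ) (hγ : ∀ s, 0 ≤ γ s) :
    ∀ s', ∑ s, γ s * (1 - α • Q)⁻¹ s s' ≤ ∑ s, γ s * (1 - α • P)⁻¹ s s' :=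
  stmt_5_general Q P hQ hP hQP α hα0 hα1 γ hγ
end

section
/- With the CMDP data and uncertainty-set data below, assume γ s > 0 for every s, and assume that the polyhedral constraints enforce the probability-simplex conditions: for every s and every v : (A s × S) → ℝ with (B s).mulVec v ≤ b s entrywise, one has ∑_{s'} v (a, s') = 0 for every a and p̄ s a s' + v (a, s') ≥ 0 for all a, s'. Then the set of real numbers { (1-α) * (γ ⬝ᵥ ((1 - α • P_f(u))⁻¹).mulVec c_f) : u an admissible deviation } is equal to the set { ∑_s w s * c_f s : (w, z) ∈ Q }. In particular, the optimal values of the inner maximization problem (7) and of the second-order cone program (13) coincide. -/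
/-!
For an admissible deviation `u` the matrix `P_f(u)` is row-stochastic, so `K = 1 - α P_f(u)` is
invertible with entrywise nonnegative inverse. The discounted occupancy measure
`w = (1 - α) γᵀ K⁻¹` then solves the balance equations `wᵀ K = (1 - α) γᵀ`, dominates
`(1 - α) γ`, and has cost `wᵀ c_f` equal to the objective; the perspective `z s = w s • u s`
turns the constraints on `u s` into the cone constraints of `Q`. Conversely, `w ≥ (1 - α) γ > 0`
lets one recover `u s = z s / w s`, and the balance equations force `w` to be the occupancy
measure of `P_f(u)`.
-/

open Matrix BigOperators

/-- The Euclidean norm of a vector indexed by a finite type. -/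
noncomputable def euclNorm {n : Type*} [Fintype n] (v : n → ℝ) : ℝ :=
  Real.sqrt (∑ i, v i ^ 2)

namespace Matrix

variable {n : Type*} [Fintype n] [DecidableEq n] {P : Matrix n n ℝ} {α : ℝ}

theorem isUnit_det_one_sub_smul_of_mem_rowStochastic (hP : P ∈ rowStochastic ℝ n)
    (hα0 : 0 ≤ α) (hα1 : α < 1) : IsUnit (1 - α • P).det := by
  refine isUnit_iff_ne_zero.2 (det_ne_zero_of_sum_row_lt_diag fun k => ?_)
  have hoff : ∀ j ∈ Finset.univ.erase k, ‖(1 - α • P) k j‖ = α * P k j := fun j hj => by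
    rw [sub_apply, one_apply_ne (Finset.ne_of_mem_erase hj).symm, zero_sub, norm_neg, smul_apply,
      smul_eq_mul, Real.norm_of_nonneg (mul_nonneg hα0 (nonneg_of_mem_rowStochastic hP))]
  have hdiag : ‖(1 - α • P) k k‖ = 1 - α * P k k := by
    rw [sub_apply, one_apply_eq, smul_apply, smul_eq_mul, Real.norm_of_nonneg]
    nlinarith [le_one_of_mem_rowStochastic hP (i := k) (j := k)]
  have hrow := Finset.add_sum_erase Finset.univ (P k) (Finset.mem_univ k)
  rw [sum_row_of_mem_rowStochastic hP k] at hrow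
  rw [Finset.sum_congr rfl hoff, ← Finset.mul_sum, hdiag]
  nlinarith

theorem inv_one_sub_eq_one_add_mul_inv {T : Matrix n n ℝ} (h : IsUnit (1 - T).det) :
    (1 - T)⁻¹ = 1 + T * (1 - T)⁻¹ := by
  have := mul_nonsing_inv _ h
  rw [sub_mul, one_mul, sub_eq_iff_eq_add] at this
  exact this

theorem inv_one_sub_smul_nonneg_of_mem_rowStochastic (hP : P ∈ rowStochastic ℝ n)
    (hα0 : 0 ≤ α) (hα1 : α < 1) (i j : n) : 0 ≤ (1 - α • P)⁻¹ i j := by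
  set Q := (1 - α • P)⁻¹
  obtain ⟨i₀, -, hmin⟩ :=
    Finset.exists_min_image Finset.univ (fun k => Q k j) ⟨i, Finset.mem_univ i⟩
  refine (hmin i (Finset.mem_univ i)).trans' (not_lt.1 fun hneg => ?_)
  -- a negative column minimum `q` of `Q = 1 + α P Q` would satisfy `q ≥ α q > q`
  have hQ := congrFun (congrFun (inv_one_sub_eq_one_add_mul_inv
    (isUnit_det_one_sub_smul_of_mem_rowStochastic hP hα0 hα1)) i₀) j
  rw [add_apply, smul_mul, smul_apply, smul_eq_mul, mul_apply] at hQ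
  have hmean : Q i₀ j ≤ ∑ k, P i₀ k * Q k j :=
    calc Q i₀ j = ∑ k, P i₀ k * Q i₀ j := by
          rw [← Finset.sum_mul, sum_row_of_mem_rowStochastic hP, one_mul]
      _ ≤ ∑ k, P i₀ k * Q k j := Finset.sum_le_sum fun k _ =>
          mul_le_mul_of_nonneg_left (hmin k (Finset.mem_univ k)) (nonneg_of_mem_rowStochastic hP)
  have hδ : (0 : ℝ) ≤ (1 : Matrix n n ℝ) i₀ j := by
    rw [one_apply]; split_ifs <;> norm_num
  nlinarith

theorem le_vecMul_inv_one_sub_smul_of_mem_rowStochastic (hP : P ∈ rowStochastic ℝ n)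
    (hα0 : 0 ≤ α) (hα1 : α < 1) {v : n → ℝ} (hv : ∀ i, 0 ≤ v i) (i : n) :
    v i ≤ (v ᵥ* (1 - α • P)⁻¹) i := by
  have hPQ : ∀ k, 0 ≤ (α • P * (1 - α • P)⁻¹) k i := fun k =>
    Finset.sum_nonneg fun l _ => mul_nonneg (mul_nonneg hα0 (nonneg_of_mem_rowStochastic hP))
      (inv_one_sub_smul_nonneg_of_mem_rowStochastic hP hα0 hα1 l i)
  rw [inv_one_sub_eq_one_add_mul_inv (isUnit_det_one_sub_smul_of_mem_rowStochastic hP hα0 hα1),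
    vecMul_add, vecMul_one, Pi.add_apply, le_add_iff_nonneg_right]
  exact Finset.sum_nonneg fun k _ => mul_nonneg (hv k) (hPQ k)

theorem exists_vecMul_one_sub_smul_eq_of_mem_rowStochastic (hP : P ∈ rowStochastic ℝ n)
    (hα0 : 0 ≤ α) (hα1 : α < 1) {v : n → ℝ} (hv : ∀ i, 0 ≤ v i) :
    ∃ w, w ᵥ* (1 - α • P) = v ∧ ∀ i, v i ≤ w i := by
  refine ⟨v ᵥ* (1 - α • P)⁻¹, ?_, le_vecMul_inv_one_sub_smul_of_mem_rowStochastic hP hα0 hα1 hv⟩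
  rw [vecMul_vecMul, nonsing_inv_mul _ (isUnit_det_one_sub_smul_of_mem_rowStochastic hP hα0 hα1),
    vecMul_one]

theorem smul_dotProduct_inv_mulVec_of_vecMul_eq {K : Matrix n n ℝ} (hK : IsUnit K.det)
    {w γ : n → ℝ} {c : ℝ} (h : w ᵥ* K = c • γ) (v : n → ℝ) :
    c * (γ ⬝ᵥ K⁻¹ *ᵥ v) = w ⬝ᵥ v := by
  rw [← smul_eq_mul, ← smul_dotProduct, ← h, dotProduct_mulVec, vecMul_vecMul,
    mul_nonsing_inv _ hK, vecMul_one]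

end Matrix

theorem euclNorm_smul {n : Type*} [Fintype n] (c : ℝ) (v : n → ℝ) :
    euclNorm (c • v) = |c| * euclNorm v := by
  simp only [euclNorm, Pi.smul_apply, smul_eq_mul, mul_pow, ← Finset.mul_sum]
  rw [Real.sqrt_mul (sq_nonneg c), Real.sqrt_sq_eq_abs]

section Perspective

variable {ι κ μ : Type*} [Fintype κ] [Fintype μ] {t : ℝ} (ht : 0 < t)
include ht

theorem mulVec_smul_le_smul_iff (B : Matrix ι κ ℝ) (b : ι → ℝ) (v : κ → ℝ) :
    (∀ i, (B *ᵥ (t • v)) i ≤ t * b i) ↔ ∀ i, (B *ᵥ v) i ≤ b i := by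
  simp only [mulVec_smul, Pi.smul_apply, smul_eq_mul, mul_le_mul_iff_right₀ ht]

theorem euclNorm_mulVec_smul_add_smul_le_iff (M : Matrix κ μ ℝ) (m : μ → ℝ) (x v : κ → ℝ)
    (y : ℝ) :
    euclNorm (Mᵀ *ᵥ (t • v) + t • m) ≤ x ⬝ᵥ (t • v) + y * t ↔
      euclNorm (Mᵀ *ᵥ v + m) ≤ x ⬝ᵥ v + y := by
  rw [mulVec_smul, ← smul_add, euclNorm_smul, abs_of_pos ht, dotProduct_smul, smul_eq_mul,
    mul_comm y, ← mul_add, mul_le_mul_iff_right₀ ht]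

end Perspective

section PerturbedTransition

variable {S : Type*} [Fintype S] [DecidableEq S] {A : S → Type*} [∀ s, Fintype (A s)]
  (f : (s : S) → A s → ℝ) (pbar u : (s : S) → A s → S → ℝ)

def perturbedTransition : Matrix S S ℝ :=
  Matrix.of fun s s' => ∑ a, f s a * (pbar s a s' + u s a s')

variable {f pbar u} in
theorem perturbedTransition_mem_rowStochastic (hf0 : ∀ s a, 0 ≤ f s a)
    (hf1 : ∀ s, ∑ a, f s a = 1) (hpbar1 : ∀ s a, ∑ s', pbar s a s' = 1)
    (hu0 : ∀ s a s', 0 ≤ pbar s a s' + u s a s') (hu1 : ∀ s a, ∑ s', u s a s' = 0) :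
    perturbedTransition f pbar u ∈ rowStochastic ℝ S := by
  refine mem_rowStochastic_iff_sum.2
    ⟨fun s s' => Finset.sum_nonneg fun a _ => mul_nonneg (hf0 s a) (hu0 s a s'), fun s => ?_⟩
  simp only [perturbedTransition, of_apply]
  rw [Finset.sum_comm]
  simp only [← Finset.mul_sum, Finset.sum_add_distrib, hpbar1, hu1, add_zero, mul_one, hf1]

theorem vecMul_one_sub_smul_perturbedTransition (α : ℝ) (w : S → ℝ) (s' : S) :
    (w ᵥ* (1 - α • perturbedTransition f pbar u)) s' =
      (∑ s, w s * ((if s = s' then (1 : ℝ) else 0) - α * ∑ a, f s a * pbar s a s'))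
        - α * ∑ s, ∑ a, f s a * (w s * u s a s') := by
  rw [vecMul, dotProduct, Finset.mul_sum, ← Finset.sum_sub_distrib]
  refine Finset.sum_congr rfl fun s _ => ?_
  have hP : perturbedTransition f pbar u s s' =
      ∑ a, f s a * pbar s a s' + ∑ a, f s a * u s a s' := by
    simp only [perturbedTransition, of_apply, mul_add, Finset.sum_add_distrib]
  have hwu : ∑ a, f s a * (w s * u s a s') = w s * ∑ a, f s a * u s a s' := by
    rw [Finset.mul_sum]
    exact Finset.sum_congr rfl fun a _ => mul_left_comm _ _ _
  rw [Matrix.sub_apply, Matrix.smul_apply, one_apply, smul_eq_mul, hP, hwu]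
  ring

end PerturbedTransition

theorem stmt_11_general {S : Type*} [Fintype S] [DecidableEq S]
    {A : S → Type*} [∀ s, Fintype (A s)]
    -- stationary policy
    (f : (s : S) → A s → ℝ) (hf0 : ∀ s a, 0 ≤ f s a) (hf1 : ∀ s, ∑ a, f s a = 1)
    -- observed transition probabilities
    (pbar : (s : S) → A s → S → ℝ)
    (hpbar1 : ∀ s a, ∑ s', pbar s a s' = 1)
    (α : ℝ) (hα0 : 0 < α) (hα1 : α < 1)
    -- initial distribution, positive everywhere (Assumption 3.2)
    (γ : S → ℝ) (hγpos : ∀ s, 0 < γ s)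
    -- cost vector
    (cf : S → ℝ)
    -- uncertainty-set data
    (ℓp ℓsc : S → ℕ)
    (B : (s : S) → Matrix (Fin (ℓp s)) (A s × S) ℝ) (b : (s : S) → Fin (ℓp s) → ℝ)
    (M : (s : S) → Matrix (A s × S) (Fin (ℓsc s)) ℝ) (m : (s : S) → Fin (ℓsc s) → ℝ)
    (x : (s : S) → A s × S → ℝ) (y : S → ℝ)
    -- the polyhedral constraints enforce the probability-simplex conditions
    (hB : ∀ s, ∀ v : A s × S → ℝ, (∀ i, (B s).mulVec v i ≤ b s i) →
        (∀ a, ∑ s', v (a, s') = 0) ∧ ∀ a s', 0 ≤ pbar s a s' + v (a, s')) :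
    {r : ℝ | ∃ u : (s : S) → A s → S → ℝ,
        (∀ s, ∀ i, (B s).mulVec (fun p : A s × S => u s p.1 p.2) i ≤ b s i) ∧
        (∀ s, euclNorm ((M s)ᵀ.mulVec (fun p : A s × S => u s p.1 p.2) + m s)
            ≤ x s ⬝ᵥ (fun p : A s × S => u s p.1 p.2) + y s) ∧
        r = (1 - α) * (γ ⬝ᵥ (((1 : Matrix S S ℝ)
              - α • Matrix.of fun s s' => ∑ a, f s a * (pbar s a s' + u s a s'))⁻¹).mulVec cf)}
      =
    {r : ℝ | ∃ (w : S → ℝ) (z : (s : S) → A s × S → ℝ),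
        (∀ s, ∀ i, (B s).mulVec (z s) i ≤ w s * b s i) ∧
        (∀ s, euclNorm ((M s)ᵀ.mulVec (z s) + w s • m s) ≤ x s ⬝ᵥ z s + y s * w s) ∧
        (∀ s, (1 - α) * γ s ≤ w s) ∧
        (∀ s' : S,
            (∑ s, w s * ((if s = s' then (1 : ℝ) else 0) - α * ∑ a, f s a * pbar s a s'))
              - α * ∑ s, ∑ a, f s a * z s (a, s') = (1 - α) * γ s') ∧
        r = ∑ s, w s * cf s} := by
  have hstoch : ∀ u : (s : S) → A s → S → ℝ,
      (∀ s i, (B s *ᵥ fun p : A s × S => u s p.1 p.2) i ≤ b s i) →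
        perturbedTransition f pbar u ∈ rowStochastic ℝ S := fun u hu =>
    perturbedTransition_mem_rowStochastic hf0 hf1 hpbar1 (fun s => (hB s _ (hu s)).2)
      (fun s => (hB s _ (hu s)).1)
  have hγα : ∀ s, 0 < (1 - α) * γ s := fun s => mul_pos (sub_pos.2 hα1) (hγpos s)
  ext r
  constructor
  · rintro ⟨u, hBu, hSOCu, rfl⟩
    have hK := isUnit_det_one_sub_smul_of_mem_rowStochastic (hstoch u hBu) hα0.le hα1
    obtain ⟨w, hbal, hw⟩ := exists_vecMul_one_sub_smul_eq_of_mem_rowStochastic (hstoch u hBu)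
      hα0.le hα1 (v := (1 - α) • γ) fun s => (hγα s).le
    have hw0 : ∀ s, 0 < w s := fun s => (hγα s).trans_le (hw s)
    refine ⟨w, fun s => w s • fun p => u s p.1 p.2,
      fun s => (mulVec_smul_le_smul_iff (hw0 s) (B s) (b s) _).2 (hBu s), fun s => ?_, hw,
      fun s' => ?_, smul_dotProduct_inv_mulVec_of_vecMul_eq hK hbal cf⟩
    · beta_reduce
      exact (euclNorm_mulVec_smul_add_smul_le_iff (hw0 s) (M s) (m s) (x s) _ (y s)).2 (hSOCu s)
    · exact (vecMul_one_sub_smul_perturbedTransition f pbar u α w s').symm.trans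
        (congrFun hbal s')
  · rintro ⟨w, z, hBz, hSOCz, hw, hbal, rfl⟩
    have hw0 : ∀ s, 0 < w s := fun s => (hγα s).trans_le (hw s)
    set u : (s : S) → A s → S → ℝ := fun s a s' => (w s)⁻¹ * z s (a, s')
    have hz : ∀ s, z s = w s • fun p => u s p.1 p.2 := fun s => by
      ext p
      simp [u, (hw0 s).ne']
    simp only [hz] at hBz hSOCz hbal
    have hBu := fun s => (mulVec_smul_le_smul_iff (hw0 s) _ _ _).1 (hBz s)
    have hK := isUnit_det_one_sub_smul_of_mem_rowStochastic (hstoch u hBu) hα0.le hα1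
    refine ⟨u, hBu, fun s => (euclNorm_mulVec_smul_add_smul_le_iff (hw0 s) _ _ _ _ _).1 (hSOCz s),
      (smul_dotProduct_inv_mulVec_of_vecMul_eq hK (funext fun s' =>
        (vecMul_one_sub_smul_perturbedTransition f pbar u α w s').trans (hbal s')) cf).symm⟩

theorem stmt_11 {S : Type*} [Fintype S] [Nonempty S] [DecidableEq S]
    {A : S → Type*} [∀ s, Fintype (A s)] [∀ s, Nonempty (A s)]
    -- stationary policy
    (f : (s : S) → A s → ℝ) (hf0 : ∀ s a, 0 ≤ f s a) (hf1 : ∀ s, ∑ a, f s a = 1)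
    -- observed transition probabilities
    (pbar : (s : S) → A s → S → ℝ)
    (hpbar0 : ∀ s a s', 0 ≤ pbar s a s') (hpbar1 : ∀ s a, ∑ s', pbar s a s' = 1)
    (α : ℝ) (hα0 : 0 < α) (hα1 : α < 1)
    -- initial distribution, positive everywhere (Assumption 3.2)
    (γ : S → ℝ) (hγpos : ∀ s, 0 < γ s) (hγ1 : ∑ s, γ s = 1)
    -- cost vector
    (cf : S → ℝ)
    -- uncertainty-set data
    (ℓp ℓsc : S → ℕ)
    (B : (s : S) → Matrix (Fin (ℓp s)) (A s × S) ℝ) (b : (s : S) → Fin (ℓp s) → ℝ)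
    (M : (s : S) → Matrix (A s × S) (Fin (ℓsc s)) ℝ) (m : (s : S) → Fin (ℓsc s) → ℝ)
    (x : (s : S) → A s × S → ℝ) (y : S → ℝ)
    -- the polyhedral constraints enforce the probability-simplex conditions
    (hB : ∀ s, ∀ v : A s × S → ℝ, (∀ i, (B s).mulVec v i ≤ b s i) →
        (∀ a, ∑ s', v (a, s') = 0) ∧ ∀ a s', 0 ≤ pbar s a s' + v (a, s')) :
    {r : ℝ | ∃ u : (s : S) → A s → S → ℝ,
        (∀ s, ∀ i, (B s).mulVec (fun p : A s × S => u s p.1 p.2) i ≤ b s i) ∧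
        (∀ s, euclNorm ((M s)ᵀ.mulVec (fun p : A s × S => u s p.1 p.2) + m s)
            ≤ x s ⬝ᵥ (fun p : A s × S => u s p.1 p.2) + y s) ∧
        r = (1 - α) * (γ ⬝ᵥ (((1 : Matrix S S ℝ)
              - α • Matrix.of fun s s' => ∑ a, f s a * (pbar s a s' + u s a s'))⁻¹).mulVec cf)}
      =
    {r : ℝ | ∃ (w : S → ℝ) (z : (s : S) → A s × S → ℝ),
        (∀ s, ∀ i, (B s).mulVec (z s) i ≤ w s * b s i) ∧
        (∀ s, euclNorm ((M s)ᵀ.mulVec (z s) + w s • m s) ≤ x s ⬝ᵥ z s + y s * w s) ∧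
        (∀ s, (1 - α) * γ s ≤ w s) ∧
        (∀ s' : S,
            (∑ s, w s * ((if s = s' then (1 : ℝ) else 0) - α * ∑ a, f s a * pbar s a s'))
              - α * ∑ s, ∑ a, f s a * z s (a, s') = (1 - α) * γ s') ∧
        r = ∑ s, w s * cf s} :=
  stmt_11_general f hf0 hf1 pbar hpbar1 α hα0 hα1 γ hγpos cf ℓp ℓsc B b M m x y hB
end

section
/- With the CMDP data, uncertainty-set data, and dual data below, assume γ s > 0 for every s, let u be an admissible deviation, and let (β, μ, θ, η, ς) be a dual-feasible tuple. Then the matrix 1 - α • P_f(u) is invertible and (1-α) * (γ ⬝ᵥ ((1 - α • P_f(u))⁻¹).mulVec c_f) ≤ (1-α) * ∑_s γ s * (ς s - η s). -/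
/-!
Under an admissible deviation `u` the matrix `P = P_f(u)` is row-stochastic, so `1 - α P`
(with `0 ≤ α < 1`) obeys a minimum principle: `(1 - α P) d ≥ 0` forces `d ≥ 0`. This makes
`1 - α P` injective, hence invertible, and makes `(1 - α P)⁻¹` monotone. Weak duality for the
polyhedral and second-order-cone constraints on `u s`, applied state by state, turns dual
feasibility into `c_f + η ≤ (1 - α P) ς`; as `P η ≥ 0` this gives `(1 - α P)⁻¹ c_f ≤ ς - η`,
and pairing with `γ ≥ 0` gives the bound.
-/

open Matrix BigOperators

lemma abs_dotProduct_le_euclNorm_mul {n : Type*} [Fintype n] (v w : n → ℝ) :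
    |v ⬝ᵥ w| ≤ euclNorm v * euclNorm w := by
  rw [euclNorm, euclNorm, ← Real.sqrt_mul (Finset.sum_nonneg fun i _ => sq_nonneg (v i))]
  exact Real.abs_le_sqrt (Finset.sum_mul_sq_le_sq_mul_sq Finset.univ v w)

theorem dotProduct_le_of_dual_feasible {n p q : Type*} [Fintype n] [Fintype p] [Fintype q]
    {B : Matrix p n ℝ} {b : p → ℝ} {M : Matrix n q ℝ} {m : q → ℝ} {x : n → ℝ} {y : ℝ}
    {U : n → ℝ} (hB : ∀ i, (B *ᵥ U) i ≤ b i) (hM : euclNorm (Mᵀ *ᵥ U + m) ≤ x ⬝ᵥ U + y)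
    {β : p → ℝ} {μ : q → ℝ} {θ : ℝ} (hβ : ∀ i, 0 ≤ β i) (hμ : euclNorm μ ≤ θ) :
    (Bᵀ *ᵥ β - M *ᵥ μ - θ • x) ⬝ᵥ U ≤ b ⬝ᵥ β + m ⬝ᵥ μ + θ * y := by
  have hpoly : β ⬝ᵥ (B *ᵥ U) ≤ b ⬝ᵥ β :=
    (dotProduct_le_dotProduct_of_nonneg_left (fun i => hB i) hβ).trans_eq (dotProduct_comm _ _)
  have hcone : -(μ ⬝ᵥ (Mᵀ *ᵥ U + m)) ≤ θ * (x ⬝ᵥ U + y) :=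
    (neg_le_abs _).trans <| (abs_dotProduct_le_euclNorm_mul _ _).trans <|
      mul_le_mul hμ hM (Real.sqrt_nonneg _) ((Real.sqrt_nonneg _).trans hμ)
  have hBβ : (Bᵀ *ᵥ β) ⬝ᵥ U = β ⬝ᵥ (B *ᵥ U) := by
    rw [mulVec_transpose, dotProduct_mulVec]
  have hMμ : (M *ᵥ μ) ⬝ᵥ U = μ ⬝ᵥ (Mᵀ *ᵥ U) := by
    rw [mulVec_transpose, dotProduct_comm, dotProduct_mulVec, dotProduct_comm]
  rw [dotProduct_add, dotProduct_comm μ m] at hcone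
  rw [sub_dotProduct, sub_dotProduct, hBβ, hMμ, smul_dotProduct, smul_eq_mul]
  linarith

section Stochastic

variable {n : Type*} [Fintype n] [DecidableEq n] {P : Matrix n n ℝ} {α : ℝ}

lemma one_sub_smul_mulVec (P : Matrix n n ℝ) (α : ℝ) (d : n → ℝ) :
    (1 - α • P) *ᵥ d = d - α • (P *ᵥ d) := by
  rw [sub_mulVec, one_mulVec, smul_mulVec]

theorem nonneg_of_nonneg_one_sub_smul_mulVec (hP : P ∈ rowStochastic ℝ n) (hα0 : 0 ≤ α)
    (hα1 : α < 1) {d : n → ℝ} (hd : 0 ≤ (1 - α • P) *ᵥ d) : 0 ≤ d := by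
  intro s
  have : Nonempty n := ⟨s⟩
  -- minimum principle: at a minimiser `i`, `d i ≤ (P d) i`, hence `(1 - α) d i ≥ 0`
  obtain ⟨i, hi⟩ := Finite.exists_min d
  have hmin : d i ≤ (P *ᵥ d) i :=
    calc d i = ∑ j, P i j * d i := by
          rw [← Finset.sum_mul, sum_row_of_mem_rowStochastic hP, one_mul]
      _ ≤ (P *ᵥ d) i := Finset.sum_le_sum fun j _ =>
          mul_le_mul_of_nonneg_left (hi j) (nonneg_of_mem_rowStochastic hP)
  have hdi : 0 ≤ d i - α * (P *ᵥ d) i := by simpa [one_sub_smul_mulVec] using hd i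
  have : 0 ≤ d i := by nlinarith [mul_le_mul_of_nonneg_left hmin hα0]
  exact this.trans (hi s)

theorem isUnit_one_sub_smul_of_mem_rowStochastic (hP : P ∈ rowStochastic ℝ n) (hα0 : 0 ≤ α)
    (hα1 : α < 1) : IsUnit (1 - α • P) := by
  rw [← mulVec_injective_iff_isUnit]
  have hle : ∀ {v w : n → ℝ}, (1 - α • P) *ᵥ v = (1 - α • P) *ᵥ w → w ≤ v := fun h =>
    sub_nonneg.1 <| nonneg_of_nonneg_one_sub_smul_mulVec hP hα0 hα1 <| by
      rw [mulVec_sub, h, sub_self]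
  exact fun v w hvw => le_antisymm (hle hvw.symm) (hle hvw)

theorem inv_mulVec_le_of_le_mulVec (hP : P ∈ rowStochastic ℝ n) (hα0 : 0 ≤ α) (hα1 : α < 1)
    {c w : n → ℝ} (h : c ≤ (1 - α • P) *ᵥ w) : (1 - α • P)⁻¹ *ᵥ c ≤ w := by
  have hdet := (isUnit_iff_isUnit_det _).1 (isUnit_one_sub_smul_of_mem_rowStochastic hP hα0 hα1)
  refine sub_nonneg.1 <| nonneg_of_nonneg_one_sub_smul_mulVec hP hα0 hα1 ?_
  rwa [mulVec_sub, mulVec_mulVec, mul_nonsing_inv _ hdet, one_mulVec, sub_nonneg]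

end Stochastic

section Policy

variable {S : Type*} [Fintype S] {A : S → Type*} [∀ s, Fintype (A s)] {f : (s : S) → A s → ℝ}

theorem mem_rowStochastic_of_policy [DecidableEq S] (hf0 : ∀ s a, 0 ≤ f s a)
    (hf1 : ∀ s, ∑ a, f s a = 1) {q : (s : S) → A s → S → ℝ} (hq0 : ∀ s a s', 0 ≤ q s a s')
    (hq1 : ∀ s a, ∑ s', q s a s' = 1) {P : Matrix S S ℝ}
    (hP : ∀ s s', P s s' = ∑ a, f s a * q s a s') : P ∈ rowStochastic ℝ S := by
  refine mem_rowStochastic_iff_sum.2 ⟨fun s s' => ?_, fun s => ?_⟩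
  · rw [hP]
    exact Finset.sum_nonneg fun a _ => mul_nonneg (hf0 s a) (hq0 s a s')
  · simp_rw [hP]
    rw [Finset.sum_comm]
    simp_rw [← Finset.mul_sum, hq1, mul_one, hf1]

theorem mulVec_sub_mulVec_eq_dotProduct {q u : (s : S) → A s → S → ℝ} {P Q : Matrix S S ℝ}
    (hP : ∀ s s', P s s' = ∑ a, f s a * (q s a s' + u s a s'))
    (hQ : ∀ s s', Q s s' = ∑ a, f s a * q s a s') (v : S → ℝ) (s : S) :
    (P *ᵥ v) s - (Q *ᵥ v) s
      = (fun p : A s × S => f s p.1 * v p.2) ⬝ᵥ fun p : A s × S => u s p.1 p.2 := by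
  simp only [mulVec, dotProduct, hP, hQ, ← Finset.sum_sub_distrib, Finset.sum_mul,
    Fintype.sum_prod_type]
  rw [Finset.sum_comm]
  refine Finset.sum_congr rfl fun a _ => Finset.sum_congr rfl fun s' _ => by ring

end Policy

theorem stmt_14_general {S : Type*} [Fintype S] [DecidableEq S]
    {A : S → Type*} [∀ s, Fintype (A s)]
    -- stationary policy
    (f : (s : S) → A s → ℝ) (hf0 : ∀ s a, 0 ≤ f s a) (hf1 : ∀ s, ∑ a, f s a = 1)
    -- observed transition probabilities
    (pbar : (s : S) → A s → S → ℝ)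
    (hpbar1 : ∀ s a, ∑ s', pbar s a s' = 1)
    (α : ℝ) (hα0 : 0 < α) (hα1 : α < 1)
    -- initial distribution, positive everywhere (Assumption 3.2)
    (γ : S → ℝ) (hγpos : ∀ s, 0 < γ s)
    -- cost vector
    (cf : S → ℝ)
    -- uncertainty-set data
    (ℓp ℓsc : S → ℕ)
    (B : (s : S) → Matrix (Fin (ℓp s)) (A s × S) ℝ) (b : (s : S) → Fin (ℓp s) → ℝ)
    (M : (s : S) → Matrix (A s × S) (Fin (ℓsc s)) ℝ) (m : (s : S) → Fin (ℓsc s) → ℝ)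
    (x : (s : S) → A s × S → ℝ) (y : S → ℝ)
    -- an admissible deviation
    (u : (s : S) → A s → S → ℝ)
    (hu1 : ∀ s, ∀ i, (B s).mulVec (fun p : A s × S => u s p.1 p.2) i ≤ b s i)
    (hu2 : ∀ s, euclNorm ((M s)ᵀ.mulVec (fun p : A s × S => u s p.1 p.2) + m s)
             ≤ x s ⬝ᵥ (fun p : A s × S => u s p.1 p.2) + y s)
    (hu3 : ∀ s a s', 0 ≤ pbar s a s' + u s a s')
    (hu4 : ∀ s a, ∑ s', u s a s' = 0)
    -- perturbed and observed transition matrices under f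
    (Pfu : Matrix S S ℝ)
    (hPfu : ∀ s s', Pfu s s' = ∑ a, f s a * (pbar s a s' + u s a s'))
    (Pbarf : Matrix S S ℝ)
    (hPbarf : ∀ s s', Pbarf s s' = ∑ a, f s a * pbar s a s')
    -- a dual-feasible tuple (β, μ, θ, η, ς)
    (β : (s : S) → Fin (ℓp s) → ℝ) (μ : (s : S) → Fin (ℓsc s) → ℝ)
    (θ : S → ℝ) (η ς : S → ℝ)
    (hd1 : ∀ s, cf s + b s ⬝ᵥ β s + m s ⬝ᵥ μ s + θ s * y s + η s
        - (ς s - α * ∑ s', Pbarf s s' * ς s') = 0)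
    (hd2 : ∀ s, ∀ p : A s × S, ((B s)ᵀ.mulVec (β s)) p - ((M s).mulVec (μ s)) p
        - θ s * x s p - α * f s p.1 * ς p.2 = 0)
    (hd3 : ∀ s, euclNorm (μ s) ≤ θ s)
    (hd4 : ∀ s, ∀ i, 0 ≤ β s i)
    (hd5 : ∀ s, 0 ≤ η s) :
    IsUnit (1 - α • Pfu) ∧
      (1 - α) * (γ ⬝ᵥ ((1 - α • Pfu)⁻¹).mulVec cf)
        ≤ (1 - α) * ∑ s, γ s * (ς s - η s) := by
  have hP : Pfu ∈ rowStochastic ℝ S :=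
    mem_rowStochastic_of_policy hf0 hf1 (q := fun s a s' => pbar s a s' + u s a s') hu3
      (fun s a => by rw [Finset.sum_add_distrib, hpbar1, hu4, add_zero]) hPfu
  refine ⟨isUnit_one_sub_smul_of_mem_rowStochastic hP hα0.le hα1,
    mul_le_mul_of_nonneg_left ?_ (sub_nonneg.2 hα1.le)⟩
  have hcost : ∀ s, cf s + η s ≤ ((1 - α • Pfu) *ᵥ ς) s := by
    intro s
    have hdual : (B s)ᵀ *ᵥ β s - M s *ᵥ μ s - θ s • x s
        = α • fun p : A s × S => f s p.1 * ς p.2 := by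
      funext p
      simp only [Pi.sub_apply, Pi.smul_apply, smul_eq_mul]
      linarith [hd2 s p]
    have hweak := dotProduct_le_of_dual_feasible (hu1 s) (hu2 s) (hd4 s) (hd3 s)
    rw [hdual, smul_dotProduct, ← mulVec_sub_mulVec_eq_dotProduct hPfu hPbarf, smul_eq_mul]
      at hweak
    have hbar := hd1 s
    rw [show ∑ s', Pbarf s s' * ς s' = (Pbarf *ᵥ ς) s from rfl] at hbar
    rw [one_sub_smul_mulVec, Pi.sub_apply, Pi.smul_apply, smul_eq_mul]
    linarith
  have hvalue : (1 - α • Pfu)⁻¹ *ᵥ cf ≤ ς - η := by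
    refine inv_mulVec_le_of_le_mulVec hP hα0.le hα1 fun s => ?_
    have hPη := nonneg_mulVec_of_mem_rowStochastic hP hd5 s
    rw [mulVec_sub, one_sub_smul_mulVec _ _ η]
    simp only [Pi.sub_apply, Pi.smul_apply, smul_eq_mul]
    linarith [hcost s, mul_nonneg hα0.le hPη]
  exact dotProduct_le_dotProduct_of_nonneg_left hvalue fun s => (hγpos s).le

theorem stmt_14 {S : Type*} [Fintype S] [Nonempty S] [DecidableEq S]
    {A : S → Type*} [∀ s, Fintype (A s)] [∀ s, Nonempty (A s)]
    -- stationary policy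
    (f : (s : S) → A s → ℝ) (hf0 : ∀ s a, 0 ≤ f s a) (hf1 : ∀ s, ∑ a, f s a = 1)
    -- observed transition probabilities
    (pbar : (s : S) → A s → S → ℝ)
    (hpbar0 : ∀ s a s', 0 ≤ pbar s a s') (hpbar1 : ∀ s a, ∑ s', pbar s a s' = 1)
    (α : ℝ) (hα0 : 0 < α) (hα1 : α < 1)
    -- initial distribution, positive everywhere (Assumption 3.2)
    (γ : S → ℝ) (hγpos : ∀ s, 0 < γ s) (hγ1 : ∑ s, γ s = 1)
    -- cost vector
    (cf : S → ℝ)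
    -- uncertainty-set data
    (ℓp ℓsc : S → ℕ)
    (B : (s : S) → Matrix (Fin (ℓp s)) (A s × S) ℝ) (b : (s : S) → Fin (ℓp s) → ℝ)
    (M : (s : S) → Matrix (A s × S) (Fin (ℓsc s)) ℝ) (m : (s : S) → Fin (ℓsc s) → ℝ)
    (x : (s : S) → A s × S → ℝ) (y : S → ℝ)
    -- an admissible deviation
    (u : (s : S) → A s → S → ℝ)
    (hu1 : ∀ s, ∀ i, (B s).mulVec (fun p : A s × S => u s p.1 p.2) i ≤ b s i)
    (hu2 : ∀ s, euclNorm ((M s)ᵀ.mulVec (fun p : A s × S => u s p.1 p.2) + m s)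
             ≤ x s ⬝ᵥ (fun p : A s × S => u s p.1 p.2) + y s)
    (hu3 : ∀ s a s', 0 ≤ pbar s a s' + u s a s')
    (hu4 : ∀ s a, ∑ s', u s a s' = 0)
    -- perturbed and observed transition matrices under f
    (Pfu : Matrix S S ℝ)
    (hPfu : ∀ s s', Pfu s s' = ∑ a, f s a * (pbar s a s' + u s a s'))
    (Pbarf : Matrix S S ℝ)
    (hPbarf : ∀ s s', Pbarf s s' = ∑ a, f s a * pbar s a s')
    -- a dual-feasible tuple (β, μ, θ, η, ς)
    (β : (s : S) → Fin (ℓp s) → ℝ) (μ : (s : S) → Fin (ℓsc s) → ℝ)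
    (θ : S → ℝ) (η ς : S → ℝ)
    (hd1 : ∀ s, cf s + b s ⬝ᵥ β s + m s ⬝ᵥ μ s + θ s * y s + η s
        - (ς s - α * ∑ s', Pbarf s s' * ς s') = 0)
    (hd2 : ∀ s, ∀ p : A s × S, ((B s)ᵀ.mulVec (β s)) p - ((M s).mulVec (μ s)) p
        - θ s * x s p - α * f s p.1 * ς p.2 = 0)
    (hd3 : ∀ s, euclNorm (μ s) ≤ θ s)
    (hd4 : ∀ s, ∀ i, 0 ≤ β s i)
    (hd5 : ∀ s, 0 ≤ η s) :
    IsUnit (1 - α • Pfu) ∧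
      (1 - α) * (γ ⬝ᵥ ((1 - α • Pfu)⁻¹).mulVec cf)
        ≤ (1 - α) * ∑ s, γ s * (ς s - η s) :=
  stmt_14_general f hf0 hf1 pbar hpbar1 α hα0 hα1 γ hγpos cf ℓp ℓsc B b M m x y u hu1 hu2 hu3 hu4
    Pfu hPfu Pbarf hPbarf β μ θ η ς hd1 hd2 hd3 hd4 hd5
end
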